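/- arXiv:math/0405063 — 6 statements merged into one kernel-verified Lean document; each statement's English description precedes it below -/
import Mathlib

section
/- Let H and G be groups, let Y ⊆ H, and let α : Y → G be a function. If the graph Γ_α = {(s, α(s)) : s ∈ Y} is a coset of the product group H × G, then Y is a coset of H and α is an affine map, i.e. α(r * s⁻¹ * t) = α(r) * α(s)⁻¹ * α(t) for all r, s, t ∈ Y. -/
open Pointwise

/-- A *coset* of a group `G` is a subset `C` for which there exist a subgroup `N` of `G`
and an element `s ∈ G` with `C = s • N`. -/
def IsCoset {G : Type*} [Group G] (C : Set G) : Prop :=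
  ∃ (N : Subgroup G) (s : G), C = s • (N : Set G)

/-- A map `α : C → G` defined on a subset `C` of `H` is *affine* if
`α (r * s⁻¹ * t) = α r * (α s)⁻¹ * α t` for all `r, s, t ∈ C`. -/
def IsAffineOn {H G : Type*} [Group H] [Group G] (α : H → G) (C : Set H) : Prop :=
  ∀ r ∈ C, ∀ s ∈ C, ∀ t ∈ C, α (r * s⁻¹ * t) = α r * (α s)⁻¹ * α t

/-- The graph of a map `α : Y → G` with `Y ⊆ H`, as a subset of `H × G`. -/
def graphOn {H G : Type*} (α : H → G) (Y : Set H) : Set (H × G) :=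
  {p : H × G | p.1 ∈ Y ∧ p.2 = α p.1}

lemma isCoset_of_closed {G : Type*} [Group G] {C : Set G} (hne : C.Nonempty)
    (hcl : ∀ a ∈ C, ∀ b ∈ C, ∀ c ∈ C, a * b⁻¹ * c ∈ C) : IsCoset C := by
  obtain ⟨c₀, hc₀⟩ := hne
  refine ⟨{ carrier := c₀⁻¹ • C
            one_mem' := ⟨c₀, hc₀, by simp⟩
            mul_mem' := ?_
            inv_mem' := ?_ }, c₀, (smul_inv_smul c₀ C).symm⟩
  · rintro a b ⟨x, hx, rfl⟩ ⟨y, hy, rfl⟩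
    refine ⟨x * c₀⁻¹ * y, hcl x hx c₀ hc₀ y hy, ?_⟩
    simp only [smul_eq_mul]
    group
  · rintro a ⟨x, hx, rfl⟩
    refine ⟨c₀ * x⁻¹ * c₀, hcl c₀ hc₀ x hx c₀ hc₀, ?_⟩
    simp only [smul_eq_mul]
    group

/-- If the graph of `α : Y → G` is a coset of `H × G`, then `Y` is a coset of `H`
and `α` is an affine map on `Y`. -/
theorem coset_graph_implies_affine {H G : Type*} [Group H] [Group G]
    (Y : Set H) (α : H → G) (h : IsCoset (graphOn α Y)) :
    IsCoset Y ∧ IsAffineOn α Y := by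
  obtain ⟨N, s₀, hC⟩ := h
  -- the graph is closed under a * b⁻¹ * c
  have hcl : ∀ a ∈ graphOn α Y, ∀ b ∈ graphOn α Y, ∀ c ∈ graphOn α Y,
      a * b⁻¹ * c ∈ graphOn α Y := by
    intro a ha b hb c hc
    rw [hC, Set.mem_smul_set_iff_inv_smul_mem] at ha hb hc ⊢
    simp only [smul_eq_mul] at ha hb hc ⊢
    have key : s₀⁻¹ * (a * b⁻¹ * c) = (s₀⁻¹ * a) * (s₀⁻¹ * b)⁻¹ * (s₀⁻¹ * c) := by group
    rw [key]
    exact N.mul_mem (N.mul_mem ha (N.inv_mem hb)) hc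
  -- the graph is nonempty
  have hne : (graphOn α Y).Nonempty := by
    rw [hC]; exact ⟨s₀, 1, N.one_mem, by simp⟩
  obtain ⟨⟨y₀, g₀⟩, hy₀, _⟩ := hne
  have key : ∀ r ∈ Y, ∀ s ∈ Y, ∀ t ∈ Y,
      r * s⁻¹ * t ∈ Y ∧ α (r * s⁻¹ * t) = α r * (α s)⁻¹ * α t := by
    intro r hr s hs t ht
    have := hcl (r, α r) ⟨hr, rfl⟩ (s, α s) ⟨hs, rfl⟩ (t, α t) ⟨ht, rfl⟩
    exact ⟨this.1, this.2.symm⟩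
  constructor
  · exact isCoset_of_closed ⟨y₀, hy₀⟩ fun a ha b hb c hc => (key a ha b hb c hc).1
  · exact fun r hr s hs t ht => (key r hr s hs t ht).2
end

section
/- Let H and G be groups, let Y ⊆ H, and let α : Y → G be a function. If the graph Γ_α = {(s, α(s)) : s ∈ Y} belongs to the coset ring Ω(H × G) of the product group H × G, then α is piecewise affine. -/
open Pointwise

/-- The *coset ring* `Ω(G)` of a group `G`: the smallest family of subsets of `G`
containing the empty set and every coset and closed under finite unions, finite
intersections and set differences. -/
inductive InCosetRing (G : Type*) [Group G] : Set G → Prop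
  | empty : InCosetRing G ∅
  | coset (s : G) (N : Subgroup G) : InCosetRing G (s • (N : Set G))
  | union ⦃A B : Set G⦄ : InCosetRing G A → InCosetRing G B → InCosetRing G (A ∪ B)
  | inter ⦃A B : Set G⦄ : InCosetRing G A → InCosetRing G B → InCosetRing G (A ∩ B)
  | sdiff ⦃A B : Set G⦄ : InCosetRing G A → InCosetRing G B → InCosetRing G (A \ B)

/-- A map `α : Y → G` with `Y ⊆ H` is *piecewise affine* if `Y` is a finite disjoint
union of sets `Yᵢ` of the coset ring of `H`, each contained in a coset `Lᵢ` carrying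
an affine map `αᵢ : Lᵢ → G` which agrees with `α` on `Yᵢ`. -/
def IsPiecewiseAffineOn {H G : Type*} [Group H] [Group G] (α : H → G) (Y : Set H) : Prop :=
  ∃ (n : ℕ) (Ys : Fin n → Set H),
    (∀ i, InCosetRing H (Ys i)) ∧
    Pairwise (Function.onFun Disjoint Ys) ∧
    Y = ⋃ i, Ys i ∧
    ∀ i, ∃ L : Set H, IsCoset L ∧ Ys i ⊆ L ∧
      ∃ αi : H → G, IsAffineOn αi L ∧ Set.EqOn αi α (Ys i)

/-!
Via the normal form of the Boolean algebra generated by cosets, the graph is a finite union of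
sets `C \ (D₁ ∪ ⋯ ∪ Dₖ)` with `C` and the `Dᵢ` cosets of `H × G`. If the first projection is
injective on `C`, then `C` is the graph of an affine map on the coset `pr₁ C`, and the piece
projects onto `pr₁ C \ ⋃ pr₁ (C ∩ Dᵢ) ∈ Ω(H)`. Otherwise some `u ≠ 1` with `u • C = C` fixes
first coordinates; since a graph cannot contain both `z` and `u * z`, the `Dᵢ` and their
translates by `u⁻¹` cover `C`. By B. H. Neumann's lemma some `Dᵢ` is a coset of a subgroup of
finite index relative to that of `C`; cutting `C` into the finitely many cosets of this subgroup
removes `Dᵢ`, and we conclude by induction on `k`. The finite cover of `Y` obtained this way is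
finally made disjoint.
-/

open Set hiding graphOn
open MeasureTheory

section Coset

variable {A : Type*} [Group A]

theorem leftCoset_eq_of_mem {N : Subgroup A} {x z : A} (hz : z ∈ x • (N : Set A)) :
    x • (N : Set A) = z • N := by
  obtain ⟨n, hn, rfl⟩ := hz
  change x • (N : Set A) = (x * n) • (N : Set A)
  rw [← smul_smul, smul_coe_set hn]

theorem IsCoset.univ : IsCoset (univ : Set A) :=
  ⟨⊤, 1, by simp⟩

theorem IsCoset.inter {C C' : Set A} (hC : IsCoset C) (hC' : IsCoset C') :
    IsCoset (C ∩ C') ∨ C ∩ C' = ∅ := by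
  obtain ⟨N, x, rfl⟩ := hC
  obtain ⟨M, y, rfl⟩ := hC'
  rcases (x • (N : Set A) ∩ y • (M : Set A)).eq_empty_or_nonempty with h | ⟨z, hzN, hzM⟩
  · exact .inr h
  · refine .inl ⟨N ⊓ M, z, ?_⟩
    rw [leftCoset_eq_of_mem hzN, leftCoset_eq_of_mem hzM, Subgroup.coe_inf, smul_set_inter]

theorem IsCoset.image {B : Type*} [Group B] (f : A →* B) {C : Set A} (hC : IsCoset C) :
    IsCoset (f '' C) := by
  obtain ⟨N, x, rfl⟩ := hC
  exact ⟨N.map f, f x, by rw [image_smul_distrib, Subgroup.coe_map]⟩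

theorem IsCoset.mul_inv_mul_mem {C : Set A} (hC : IsCoset C) {x y z : A} (hx : x ∈ C)
    (hy : y ∈ C) (hz : z ∈ C) : x * y⁻¹ * z ∈ C := by
  obtain ⟨N, c, rfl⟩ := hC
  rw [mem_leftCoset_iff] at hx hy hz ⊢
  have : (c⁻¹ * x) * (c⁻¹ * y)⁻¹ * (c⁻¹ * z) = c⁻¹ * (x * y⁻¹ * z) := by group
  exact this ▸ N.mul_mem (N.mul_mem hx (N.inv_mem hy)) hz

theorem IsCoset.mul_inv_smul_eq {C : Set A} (hC : IsCoset C) {x y : A} (hx : x ∈ C)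
    (hy : y ∈ C) : (y * x⁻¹) • C = C := by
  obtain ⟨N, c, rfl⟩ := hC
  rw [leftCoset_eq_of_mem hx, smul_smul, inv_mul_cancel_right, ← leftCoset_eq_of_mem hy,
    leftCoset_eq_of_mem hx]

theorem subset_or_disjoint_of_subset_leftCoset {M : Subgroup A} {g x : A} {S : Set A}
    (hS : S ⊆ g • (M : Set A)) : S ⊆ x • (M : Set A) ∨ Disjoint S (x • (M : Set A)) := by
  by_cases hx : x ∈ g • (M : Set A)
  · exact .inl (leftCoset_eq_of_mem hx ▸ hS)
  · refine .inr (disjoint_left.mpr fun z hzS hzx => hx ?_)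
    rw [leftCoset_eq_of_mem (hS hzS), ← leftCoset_eq_of_mem hzx]
    exact ⟨1, M.one_mem, mul_one x⟩

theorem exists_finiteIndex_subgroupOf_of_leftCoset_subset_biUnion {ι : Type*} {s : Finset ι}
    {g : ι → A} {M : ι → Subgroup A} {N : Subgroup A} {c : A}
    (hcover : c • (N : Set A) ⊆ ⋃ i ∈ s, g i • (M i : Set A)) :
    ∃ i ∈ s, ((M i).subgroupOf N).FiniteIndex := by
  have hbase : ∀ i, ∃ n : N, c * n ∈ g i • (M i : Set A) ∨ ∀ m : N, c * m ∉ g i • (M i : Set A) :=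
    fun i => (em _).elim (fun ⟨n, hn⟩ => ⟨n, .inl hn⟩) fun h => ⟨1, .inr (not_exists.mp h)⟩
  choose n hn using hbase
  refine Subgroup.exists_finiteIndex_of_leftCoset_cover (g := n) <| eq_univ_of_forall fun m => ?_
  obtain ⟨i, hi, hm⟩ := mem_iUnion₂.mp (hcover (smul_mem_smul_set m.2))
  refine mem_iUnion₂.mpr ⟨i, hi, ?_⟩
  rcases hn i with hni | hni
  · rw [smul_eq_mul, mem_leftCoset_iff] at hm
    rw [mem_leftCoset_iff] at hni
    rw [mem_leftCoset_iff, SetLike.mem_coe, Subgroup.mem_subgroupOf]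
    simpa [mul_assoc] using (M i).mul_mem ((M i).inv_mem hni) hm
  · exact absurd hm (hni m)

theorem exists_finite_leftCoset_cover_of_finiteIndex_subgroupOf {M N : Subgroup A}
    [(M.subgroupOf N).FiniteIndex] (c : A) :
    ∃ T : Set A, T.Finite ∧ c • (N : Set A) ⊆ ⋃ g ∈ T, g • (M : Set A) := by
  refine ⟨range fun q : N ⧸ M.subgroupOf N => c * (q.out : A), finite_range _, ?_⟩
  rintro _ ⟨n, hn, rfl⟩
  obtain ⟨k, hk⟩ := QuotientGroup.mk_out_eq_mul (M.subgroupOf N) ⟨n, hn⟩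
  refine mem_biUnion (mem_range_self (QuotientGroup.mk ⟨n, hn⟩)) ⟨(k : A)⁻¹, ?_, ?_⟩
  · exact (M.inv_mem k.2 :)
  · simp [hk, mul_assoc]

theorem exists_ssubset_sdiff_eq_of_subset_leftCoset {S : Set A} {M : Subgroup A} {g x : A}
    {𝒟 : Finset (A × Subgroup A)} (hS : S ⊆ g • (M : Set A)) (hx : (x, M) ∈ 𝒟) :
    S \ ⋃ p ∈ 𝒟, p.1 • (p.2 : Set A) = ∅ ∨
      ∃ 𝒟' ⊂ 𝒟, S \ ⋃ p ∈ 𝒟, p.1 • (p.2 : Set A) = S \ ⋃ p ∈ 𝒟', p.1 • (p.2 : Set A) := by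
  classical
  rcases subset_or_disjoint_of_subset_leftCoset (x := x) hS with hsub | hdisj
  · exact .inl (sdiff_eq_empty.mpr
      (hsub.trans (subset_biUnion_of_mem (u := fun p : A × Subgroup A => p.1 • (p.2 : Set A)) hx)))
  · refine .inr ⟨𝒟.erase (x, M), Finset.erase_ssubset hx, ?_⟩
    conv_lhs => rw [← Finset.insert_erase hx, Finset.set_biUnion_insert, ← sdiff_sdiff,
      hdisj.sdiff_eq_left]

end Coset

section CosetRing

variable {A : Type*} [Group A]

theorem InCosetRing.of_isCoset {C : Set A} (hC : IsCoset C) : InCosetRing A C := by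
  obtain ⟨N, s, rfl⟩ := hC
  exact .coset s N

theorem isSetAlgebra_inCosetRing : IsSetAlgebra {S : Set A | InCosetRing A S} where
  empty_mem := .empty
  compl_mem _ hS := compl_eq_univ_sdiff _ ▸ .sdiff (.of_isCoset IsCoset.univ) hS
  union_mem _ _ hS hT := .union hS hT

theorem InCosetRing.mem_generateSetAlgebra {S : Set A} (hS : InCosetRing A S) :
    S ∈ generateSetAlgebra {C | IsCoset C} := by
  have h := isSetAlgebra_generateSetAlgebra (𝒜 := {C : Set A | IsCoset C})
  induction hS with
  | empty => exact h.empty_mem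
  | coset s N => exact self_subset_generateSetAlgebra ⟨N, s, rfl⟩
  | union _ _ hA hB => exact h.union_mem hA hB
  | inter _ _ hA hB => exact h.inter_mem hA hB
  | sdiff _ _ hA hB => exact h.sdiff_mem hA hB

theorem exists_eq_sdiff_of_isCoset_or_isCoset_compl {a : Set (Set A)} (ha : a.Finite)
    (h : ∀ t ∈ a, IsCoset t ∨ IsCoset tᶜ) :
    ∃ (C : Set A) (𝒟 : Finset (A × Subgroup A)), (IsCoset C ∨ C = ∅) ∧
      ⋂ t ∈ a, t = C \ ⋃ p ∈ 𝒟, p.1 • (p.2 : Set A) := by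
  classical
  induction a, ha using Set.Finite.induction_on with
  | empty => exact ⟨univ, ∅, .inl IsCoset.univ, by simp⟩
  | @insert t a _ _ ih =>
    obtain ⟨C, 𝒟, hC, hCa⟩ := ih fun u hu => h u (mem_insert_of_mem t hu)
    rw [biInter_insert, hCa]
    rcases h t (mem_insert t a) with ht | ⟨M, x, hx⟩
    · refine ⟨t ∩ C, 𝒟, ?_, (inter_sdiff_assoc _ _ _).symm⟩
      rcases hC with hC | rfl
      · exact ht.inter hC
      · exact .inr (inter_empty t)
    · refine ⟨C, insert (x, M) 𝒟, hC, ?_⟩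
      rw [Finset.set_biUnion_insert, ← hx, ← sdiff_sdiff, sdiff_compl, inter_comm C t,
        inter_sdiff_assoc]

end CosetRing

section AffinePiece

variable {H G : Type*} [Group H] [Group G]

def IsAffinePiece (α : H → G) (P : Set H) : Prop :=
  InCosetRing H P ∧ ∃ L, IsCoset L ∧ P ⊆ L ∧ ∃ β : H → G, IsAffineOn β L ∧ EqOn β α P

theorem IsAffinePiece.mono {α : H → G} {P Q : Set H} (hP : IsAffinePiece α P) (hQP : Q ⊆ P)
    (hQ : InCosetRing H Q) : IsAffinePiece α Q := by
  obtain ⟨-, L, hL, hPL, β, hβ, hβα⟩ := hP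
  exact ⟨hQ, L, hL, hQP.trans hPL, β, hβ, hβα.mono hQP⟩

def IsFiniteUnionOfAffinePieces (α : H → G) (Y : Set H) : Prop :=
  ∃ 𝒮 : Set (Set H), 𝒮.Finite ∧ (∀ P ∈ 𝒮, IsAffinePiece α P) ∧ Y = ⋃₀ 𝒮

namespace IsFiniteUnionOfAffinePieces

theorem empty (α : H → G) : IsFiniteUnionOfAffinePieces α ∅ :=
  ⟨∅, finite_empty, by simp, sUnion_empty.symm⟩

theorem of_isAffinePiece {α : H → G} {P : Set H} (hP : IsAffinePiece α P) :
    IsFiniteUnionOfAffinePieces α P :=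
  ⟨{P}, finite_singleton P, by simpa, (sUnion_singleton P).symm⟩

theorem biUnion {α : H → G} {ι : Type*} {s : Set ι} (hs : s.Finite) {Y : ι → Set H}
    (hY : ∀ i ∈ s, IsFiniteUnionOfAffinePieces α (Y i)) :
    IsFiniteUnionOfAffinePieces α (⋃ i ∈ s, Y i) := by
  choose! 𝒮 h𝒮fin h𝒮 hY𝒮 using hY
  refine ⟨⋃ i ∈ s, 𝒮 i, hs.biUnion h𝒮fin, ?_, ?_⟩
  · simp only [mem_iUnion₂]
    rintro P ⟨i, hi, hP⟩
    exact h𝒮 i hi P hP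
  · simp only [sUnion_iUnion]
    exact iUnion₂_congr hY𝒮

theorem isPiecewiseAffineOn {α : H → G} {Y : Set H} (hY : IsFiniteUnionOfAffinePieces α Y) :
    IsPiecewiseAffineOn α Y := by
  obtain ⟨𝒮, h𝒮fin, h𝒮, rfl⟩ := hY
  obtain ⟨n, f, hf⟩ := h𝒮fin.fin_embedding
  have hf𝒮 : ∀ i, IsAffinePiece α (f i) := fun i => h𝒮 _ (hf ▸ mem_range_self i)
  have hring : ∀ i, InCosetRing H (disjointed f i) := fun i =>
    .sdiff (hf𝒮 i).1 (Finset.sup_induction .empty (fun _ ha _ hb => .union ha hb)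
      fun j _ => (hf𝒮 j).1)
  refine ⟨n, disjointed f, hring, disjoint_disjointed f, ?_, fun i => ?_⟩
  · rw [iUnion_disjointed, ← hf, sUnion_range]
  · exact ((hf𝒮 i).mono (disjointed_subset f i) (hring i)).2

end IsFiniteUnionOfAffinePieces

end AffinePiece

section Graph

theorem injOn_fst_graphOn {H G : Type*} (α : H → G) (Y : Set H) :
    InjOn Prod.fst (graphOn α Y) :=
  fun _ hp _ hq h => Prod.ext h (hp.2.trans (h ▸ hq.2.symm))

theorem fst_image_graphOn {H G : Type*} (α : H → G) (Y : Set H) :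
    Prod.fst '' graphOn α Y = Y :=
  ext fun x => ⟨by rintro ⟨p, hp, rfl⟩; exact hp.1, fun hx => ⟨(x, α x), ⟨hx, rfl⟩, rfl⟩⟩

variable {H G : Type*} [Group H] [Group G]

theorem IsCoset.exists_isAffineOn_of_injOn_fst {C : Set (H × G)} (hC : IsCoset C)
    (hinj : InjOn Prod.fst C) :
    ∃ β : H → G, IsAffineOn β (Prod.fst '' C) ∧ ∀ p ∈ C, β p.1 = p.2 := by
  classical
  set β : H → G := fun h => (Function.invFunOn Prod.fst C h).2
  have hβ : ∀ p ∈ C, β p.1 = p.2 := fun p hp => congrArg Prod.snd (hinj.leftInvOn_invFunOn hp)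
  refine ⟨β, ?_, hβ⟩
  rintro _ ⟨p, hp, rfl⟩ _ ⟨q, hq, rfl⟩ _ ⟨w, hw, rfl⟩
  rw [hβ p hp, hβ q hq, hβ w hw]
  exact hβ _ (hC.mul_inv_mul_mem hp hq hw)

variable {α : H → G} {Y : Set H}

theorem isAffinePiece_fst_image_sdiff {C : Set (H × G)} (hC : IsCoset C)
    (hinj : InjOn Prod.fst C) (𝒟 : Finset ((H × G) × Subgroup (H × G)))
    (hgraph : C \ ⋃ p ∈ 𝒟, p.1 • (p.2 : Set (H × G)) ⊆ graphOn α Y) :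
    IsAffinePiece α (Prod.fst '' (C \ ⋃ p ∈ 𝒟, p.1 • (p.2 : Set (H × G)))) := by
  have hfst : ∀ {D : Set (H × G)}, IsCoset D → IsCoset (Prod.fst '' D) :=
    fun hD => hD.image (MonoidHom.fst H G)
  obtain ⟨β, hβ, hβC⟩ := hC.exists_isAffineOn_of_injOn_fst hinj
  refine ⟨?_, _, hfst hC, image_mono sdiff_subset, β, hβ, ?_⟩
  · rw [hinj.image_sdiff, inter_iUnion₂, image_iUnion₂]
    refine .sdiff (.of_isCoset (hfst hC)) (isSetAlgebra_inCosetRing.biUnion_mem 𝒟 fun p _ => ?_)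
    rcases hC.inter ⟨p.2, p.1, rfl⟩ with h | h
    · exact .of_isCoset (hfst h)
    · rw [h, image_empty]
      exact .empty
  · rintro _ ⟨p, hp, rfl⟩
    exact (hβC p hp.1).trans (hgraph hp).2

theorem exists_finiteIndex_subgroupOf_of_not_injOn_fst {N : Subgroup (H × G)} {c : H × G}
    {𝒟 : Finset ((H × G) × Subgroup (H × G))} (hinj : ¬InjOn Prod.fst (c • (N : Set (H × G))))
    (hgraph : c • (N : Set (H × G)) \ ⋃ p ∈ 𝒟, p.1 • (p.2 : Set (H × G)) ⊆ graphOn α Y) :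
    ∃ p ∈ 𝒟, (p.2.subgroupOf N).FiniteIndex := by
  classical
  set C := c • (N : Set (H × G))
  set U := ⋃ p ∈ 𝒟, p.1 • (p.2 : Set (H × G))
  obtain ⟨x, hx, y, hy, hxy, hne⟩ : ∃ x ∈ C, ∃ y ∈ C, x.1 = y.1 ∧ x ≠ y := by
    simpa [InjOn] using hinj
  set u := y * x⁻¹
  have hu1 : u ≠ 1 := fun h => hne (mul_inv_eq_one.mp h).symm
  have huC : u • C = C := IsCoset.mul_inv_smul_eq ⟨N, c, rfl⟩ hx hy
  -- `z` and `u * z` lie over the same point of `H`, so they cannot both survive in the graph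
  have hcover : C ⊆ ⋃ q ∈ 𝒟 ×ˢ {1, u⁻¹}, (q.2 * q.1.1) • (q.1.2 : Set (H × G)) := by
    intro z hz
    by_cases hzU : z ∈ U
    · obtain ⟨p, hp, hzp⟩ := mem_iUnion₂.mp hzU
      exact mem_iUnion₂.mpr ⟨(p, 1), Finset.mem_product.mpr ⟨hp, by simp⟩, by simpa using hzp⟩
    have huz : u * z ∈ C := huC ▸ smul_mem_smul_set hz
    by_cases huzU : u * z ∈ U
    · obtain ⟨p, hp, hzp⟩ := mem_iUnion₂.mp huzU
      refine mem_iUnion₂.mpr ⟨(p, u⁻¹), Finset.mem_product.mpr ⟨hp, by simp⟩, ?_⟩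
      rw [mem_leftCoset_iff] at hzp ⊢
      simpa [mul_assoc] using hzp
    · have hfst : (u * z).1 = z.1 := by simp [u, hxy]
      exact absurd (mul_eq_right.mp (injOn_fst_graphOn α Y (hgraph ⟨huz, huzU⟩)
        (hgraph ⟨hz, hzU⟩) hfst)) hu1
  obtain ⟨q, hq, hfin⟩ := exists_finiteIndex_subgroupOf_of_leftCoset_subset_biUnion hcover
  exact ⟨q.1, (Finset.mem_product.mp hq).1, hfin⟩

theorem isFiniteUnionOfAffinePieces_fst_image_sdiff (𝒟 : Finset ((H × G) × Subgroup (H × G)))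
    {C : Set (H × G)} (hC : IsCoset C ∨ C = ∅)
    (hgraph : C \ ⋃ p ∈ 𝒟, p.1 • (p.2 : Set (H × G)) ⊆ graphOn α Y) :
    IsFiniteUnionOfAffinePieces α (Prod.fst '' (C \ ⋃ p ∈ 𝒟, p.1 • (p.2 : Set (H × G)))) := by
  induction 𝒟 using Finset.strongInduction generalizing C with | H 𝒟 ih => ?_
  rcases hC with ⟨N, c, rfl⟩ | rfl
  swap
  · simpa using IsFiniteUnionOfAffinePieces.empty α
  by_cases hinj : InjOn Prod.fst (c • (N : Set (H × G)))
  · exact .of_isAffinePiece (isAffinePiece_fst_image_sdiff ⟨N, c, rfl⟩ hinj 𝒟 hgraph)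
  obtain ⟨⟨x, M⟩, hx, hfin⟩ := exists_finiteIndex_subgroupOf_of_not_injOn_fst hinj hgraph
  obtain ⟨T, hT, hcover⟩ :=
    exists_finite_leftCoset_cover_of_finiteIndex_subgroupOf (M := M) (N := N) c
  rw [← inter_eq_left.mpr hcover, inter_iUnion₂, iUnion_sdiff,
    iUnion_congr fun _ => iUnion_sdiff _ _, image_iUnion₂]
  refine .biUnion hT fun g _ => ?_
  rcases exists_ssubset_sdiff_eq_of_subset_leftCoset inter_subset_right hx with h | ⟨𝒟', h𝒟', h⟩
  · rw [h, image_empty]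
    exact .empty α
  · rw [h]
    refine ih 𝒟' h𝒟' (IsCoset.inter ⟨N, c, rfl⟩ ⟨M, g, rfl⟩) ?_
    rw [← h]
    exact (sdiff_subset_sdiff_left inter_subset_left).trans hgraph

end Graph

/-- If the graph of `α : Y → G` belongs to the coset ring of `H × G`, then `α` is
piecewise affine. -/
theorem piecewiseAffine_of_graph_in_cosetRing {H G : Type*} [Group H] [Group G]
    (Y : Set H) (α : H → G) (h : InCosetRing (H × G) (graphOn α Y)) :
    IsPiecewiseAffineOn α Y := by
  obtain ⟨𝒜, h𝒜, hfin, hcoset, hgraph⟩ := mem_generateSetAlgebra_elim h.mem_generateSetAlgebra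
  have hY : Y = ⋃ a ∈ 𝒜, Prod.fst '' ⋂ t ∈ a, t := by
    rw [← image_iUnion₂, ← hgraph, fst_image_graphOn]
  rw [hY]
  refine (IsFiniteUnionOfAffinePieces.biUnion h𝒜 fun a ha => ?_).isPiecewiseAffineOn
  obtain ⟨C, 𝒟, hC, hCa⟩ := exists_eq_sdiff_of_isCoset_or_isCoset_compl (hfin a ha) (hcoset a ha)
  have hsub : C \ ⋃ p ∈ 𝒟, p.1 • (p.2 : Set (H × G)) ⊆ graphOn α Y :=
    hCa ▸ hgraph ▸ subset_biUnion_of_mem (u := fun a => ⋂ t ∈ a, t) ha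
  rw [hCa]
  exact isFiniteUnionOfAffinePieces_fst_image_sdiff 𝒟 hC hsub
end

section
/- It is impossible to cover a group G by finitely many cosets of subgroups of infinite index: if G = ⋃_{i=1}^n sᵢ • Hᵢ where each Hᵢ is a subgroup of G and each sᵢ ∈ G, then at least one of the subgroups Hᵢ has finite index in G. -/
open Pointwise

/-- It is impossible to cover a group `G` by finitely many cosets of subgroups of
infinite index: if `G = ⋃ i, sᵢ • Hᵢ`, then some `Hᵢ` has finite index. -/
theorem exists_finiteIndex_of_cover {G : Type*} [Group G] (n : ℕ)
    (s : Fin n → G) (H : Fin n → Subgroup G)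
    (hcover : (Set.univ : Set G) = ⋃ i, s i • (H i : Set G)) :
    ∃ i, (H i).FiniteIndex := by
  have hcovers : ⋃ i ∈ (Finset.univ : Finset (Fin n)), s i • (H i : Set G) = Set.univ := by
    simpa using hcover.symm
  obtain ⟨k, _, hk⟩ := Subgroup.exists_finiteIndex_of_leftCoset_cover hcovers
  exact ⟨k, hk⟩
end

section
/- Let H be a topological group, let G be a locally compact Hausdorff topological group, let C be a coset of H, and let α : C → G be an affine map that is continuous on C (with the subspace topology). Then α admits a continuous extension to an affine map ᾱ : C̄ → G defined on the closure C̄ of C in H, i.e. there exists a continuous map ᾱ : C̄ → G with ᾱ = α on C and ᾱ(r * s⁻¹ * t) = ᾱ(r) * ᾱ(s)⁻¹ * ᾱ(t) for all r, s, t ∈ C̄. -/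
open Pointwise

open Filter Topology Set

/-- A coset is closed under the map `(r, s, t) ↦ r * s⁻¹ * t`. -/
lemma IsCoset.mul_inv_mul_mem_s8 {H : Type*} [Group H] {C : Set H} (hC : IsCoset C) :
    ∀ r ∈ C, ∀ s ∈ C, ∀ t ∈ C, r * s⁻¹ * t ∈ C := by
  obtain ⟨N, g, rfl⟩ := hC
  rintro r hr s hs t ht
  obtain ⟨a, ha, rfl⟩ := hr
  obtain ⟨b, hb, rfl⟩ := hs
  obtain ⟨c, hc, rfl⟩ := ht
  refine ⟨a * b⁻¹ * c, mul_mem (mul_mem ha (inv_mem hb)) hc, ?_⟩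
  simp only [smul_eq_mul]
  group

lemma IsCoset.nonempty {H : Type*} [Group H] {C : Set H} (hC : IsCoset C) : C.Nonempty := by
  obtain ⟨N, g, rfl⟩ := hC
  exact ⟨g * 1, 1, N.one_mem, rfl⟩

lemma IsCoset.closure {H : Type*} [Group H] [TopologicalSpace H] [IsTopologicalGroup H]
    {C : Set H} (hC : IsCoset C) : IsCoset (_root_.closure C) := by
  obtain ⟨N, g, rfl⟩ := hC
  refine ⟨N.topologicalClosure, g, ?_⟩
  rw [closure_smul]
  rfl

/-- A continuous affine map `α : C → G` on a coset `C` of a topological group `H`,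
with values in a locally compact Hausdorff group `G`, extends to a continuous affine
map on the closure of `C`. -/
theorem continuous_affine_extension {H G : Type*}
    [Group H] [TopologicalSpace H] [IsTopologicalGroup H]
    [Group G] [TopologicalSpace G] [IsTopologicalGroup G]
    [LocallyCompactSpace G] [T2Space G]
    (C : Set H) (hC : IsCoset C) (α : H → G)
    (haff : IsAffineOn α C) (hcont : ContinuousOn α C) :
    ∃ β : H → G, ContinuousOn β (closure C) ∧ Set.EqOn β α C ∧
      IsAffineOn β (closure C) := by
  obtain ⟨c, hc⟩ := hC.nonempty
  -- Step 1: a Cauchy-type estimate.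
  have cauchy : ∀ V ∈ 𝓝 (1 : G), ∃ U ∈ 𝓝 (1 : H),
      ∀ a, a ∈ C → ∀ b, b ∈ C → a⁻¹ * b ∈ U → (α a)⁻¹ * α b ∈ V := by
    intro V hV
    -- continuity of `z ↦ (α c)⁻¹ * α z` at `c` within `C`, with value `1`
    have h1 : Tendsto (fun z => (α c)⁻¹ * α z) (𝓝[C] c) (𝓝 1) := by
      have h2 : Tendsto (fun z => (α c)⁻¹ * α z) (𝓝[C] c) (𝓝 ((α c)⁻¹ * α c)) :=
        tendsto_const_nhds.mul (hcont c hc).tendsto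
      simpa using h2
    have hW : {z | (α c)⁻¹ * α z ∈ V} ∈ 𝓝[C] c := h1 hV
    rw [mem_nhdsWithin] at hW
    obtain ⟨W, hWo, hcW, hWsub⟩ := hW
    -- the map `u ↦ c * u` is continuous and sends `1` to `c`
    have hm : Tendsto (fun u : H => c * u) (𝓝 1) (𝓝 c) := by
      simpa using (continuous_mul_left c).tendsto (1 : H)
    refine ⟨_, hm (hWo.mem_nhds hcW), fun a ha b hb hab => ?_⟩
    have hz : c * (a⁻¹ * b) ∈ W := hab
    have hzC : c * a⁻¹ * b ∈ C := hC.mul_inv_mul_mem_s8 c hc a ha b hb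
    have := hWsub ⟨by rwa [← mul_assoc] at hz, hzC⟩
    rw [Set.mem_setOf_eq, haff c hc a ha b hb] at this
    simpa [mul_assoc] using this
  -- Step 2: limits of `α` exist along `𝓝[C] x` for `x ∈ closure C`.
  have key : ∀ x ∈ closure C, ∃ y : G, Tendsto α (𝓝[C] x) (𝓝 y) := by
    intro x hx
    haveI : (𝓝[C] x).NeBot := mem_closure_iff_nhdsWithin_neBot.mp hx
    set F := 𝓝[C] x with hF
    have hmemC : ∀ᶠ a in F, a ∈ C := eventually_mem_nhdsWithin
    -- smallness of differences
    have hsm : ∀ U ∈ 𝓝 (1 : H), ∃ S ∈ F, S ⊆ C ∧ ∀ a ∈ S, ∀ b ∈ S, a⁻¹ * b ∈ U := by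
      intro U hU
      have hcont2 : Tendsto (fun p : H × H => p.1⁻¹ * p.2) (𝓝 (x, x)) (𝓝 1) := by
        have : Tendsto (fun p : H × H => p.1⁻¹ * p.2) (𝓝 (x, x)) (𝓝 (x⁻¹ * x)) :=
          ((continuous_inv.comp continuous_fst).tendsto (x, x)).mul
            (continuous_snd.tendsto (x, x))
        simpa using this
      have hpre : (fun p : H × H => p.1⁻¹ * p.2) ⁻¹' U ∈ 𝓝 (x, x) := hcont2 hU
      obtain ⟨u, hu, v, hv, huv⟩ := mem_nhds_prod_iff.mp hpre
      refine ⟨u ∩ v ∩ C, ?_, fun a ha => ha.2, fun a ha b hb => ?_⟩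
      swap
      · have hab : (a, b) ∈ u ×ˢ v := ⟨ha.1.1, hb.1.2⟩
        exact huv hab
      exact Filter.inter_mem (nhdsWithin_le_nhds (Filter.inter_mem hu hv))
        self_mem_nhdsWithin
    -- a compact neighbourhood of 1 in G
    obtain ⟨K, hK, hK1⟩ := exists_compact_mem_nhds (1 : G)
    obtain ⟨U, hU, hUK⟩ := cauchy K hK1
    obtain ⟨S, hSF, hSC, hS⟩ := hsm U hU
    obtain ⟨a₀, ha₀⟩ := Filter.nonempty_of_mem hSF
    -- eventually `α b ∈ α a₀ • K`, a compact set
    have hev : ∀ᶠ b in F, α b ∈ (fun g => α a₀ * g) '' K := by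
      filter_upwards [hSF] with b hb
      exact ⟨(α a₀)⁻¹ * α b, hUK a₀ (hSC ha₀) b (hSC hb) (hS a₀ ha₀ b hb), by group⟩
    have hKc : IsCompact ((fun g => α a₀ * g) '' K) := hK.image (continuous_mul_left _)
    -- get a cluster point
    set L := map α F ⊓ 𝓟 ((fun g => α a₀ * g) '' K) with hL
    haveI : L.NeBot := by
      rw [hL, inf_principal_neBot_iff]
      intro V hV
      have hVev : ∀ᶠ b in F, α b ∈ V := mem_map.mp hV
      obtain ⟨b, hb1, hb2⟩ := (hVev.and hev).exists
      exact ⟨α b, hb1, hb2⟩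
    have hle : L ≤ 𝓟 ((fun g => α a₀ * g) '' K) := hL ▸ inf_le_right
    obtain ⟨y, _, hy⟩ := hKc.exists_clusterPt hle
    have hyc : ClusterPt y (map α F) := hy.mono (hL ▸ inf_le_left)
    refine ⟨y, ?_⟩
    -- Step 3: the cluster point is a limit.
    rw [Filter.tendsto_def]
    intro W hW
    -- choose `W₁ ∈ 𝓝 y`, `V ∈ 𝓝 1` with `W₁ * V ⊆ W`
    have hmul : Tendsto (fun p : G × G => p.1 * p.2) (𝓝 (y, 1)) (𝓝 y) := by
      simpa using continuous_mul.tendsto ((y, 1) : G × G)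
    obtain ⟨W₁, hW₁, V, hV, hWV⟩ := mem_nhds_prod_iff.mp (hmul hW)
    obtain ⟨U', hU', hUV⟩ := cauchy V hV
    obtain ⟨S', hS'F, hS'C, hS'⟩ := hsm U' hU'
    -- pick `a₁ ∈ S'` with `α a₁ ∈ W₁` using the cluster point
    have himg : α '' S' ∈ map α F :=
      mem_map.mpr (mem_of_superset hS'F (Set.subset_preimage_image α S'))
    obtain ⟨g, ha₁W, a₁, ha₁S, rfl⟩ := clusterPt_iff_nonempty.mp hyc hW₁ himg
    filter_upwards [hS'F] with b hb
    have hVmem : (α a₁)⁻¹ * α b ∈ V :=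
      hUV a₁ (hS'C ha₁S) b (hS'C hb) (hS' a₁ ha₁S b hb)
    have hpair : (α a₁, (α a₁)⁻¹ * α b) ∈ W₁ ×ˢ V := ⟨ha₁W, hVmem⟩
    have : α a₁ * ((α a₁)⁻¹ * α b) ∈ W := hWV hpair
    simpa using this
  -- define the extension
  set β : H → G := fun x => limUnder (𝓝[C] x) α with hβdef
  have hβ : ∀ x ∈ closure C, Tendsto α (𝓝[C] x) (𝓝 (β x)) := fun x hx =>
    tendsto_nhds_limUnder (key x hx)
  have heq : Set.EqOn β α C := by
    intro x hx
    haveI : (𝓝[C] x).NeBot := mem_closure_iff_nhdsWithin_neBot.mp (subset_closure hx)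
    exact tendsto_nhds_unique (hβ x (subset_closure hx)) (hcont x hx).tendsto
  refine ⟨β, ?_, heq, ?_⟩
  · -- continuity on the closure
    intro x hx
    rw [ContinuousWithinAt, Filter.tendsto_def]
    intro W hW
    obtain ⟨W', hW', hW'closed, hW'sub⟩ := exists_mem_nhds_isClosed_subset hW
    have hev : {a | α a ∈ W'} ∈ 𝓝[C] x := hβ x hx hW'
    rw [mem_nhdsWithin] at hev
    obtain ⟨U, hUo, hxU, hUsub⟩ := hev
    rw [mem_nhdsWithin]
    refine ⟨U, hUo, hxU, fun x' hx' => ?_⟩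
    obtain ⟨hx'U, hx'cl⟩ := hx'
    haveI : (𝓝[C] x').NeBot := mem_closure_iff_nhdsWithin_neBot.mp hx'cl
    have hevW : ∀ᶠ a in 𝓝[C] x', α a ∈ W' := by
      filter_upwards [nhdsWithin_le_nhds (hUo.mem_nhds hx'U),
        (self_mem_nhdsWithin : C ∈ 𝓝[C] x')] with a haU haC
      exact hUsub ⟨haU, haC⟩
    have : β x' ∈ closure W' := mem_closure_of_tendsto (hβ x' hx'cl) hevW
    exact hW'sub (hW'closed.closure_eq ▸ this)
  · -- affinity on the closure
    intro r hr s hs t ht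
    haveI hFr : (𝓝[C] r).NeBot := mem_closure_iff_nhdsWithin_neBot.mp hr
    haveI hFs : (𝓝[C] s).NeBot := mem_closure_iff_nhdsWithin_neBot.mp hs
    haveI hFt : (𝓝[C] t).NeBot := mem_closure_iff_nhdsWithin_neBot.mp ht
    set F : Filter (H × H × H) := 𝓝[C] r ×ˢ (𝓝[C] s ×ˢ 𝓝[C] t) with hFdef
    haveI : F.NeBot := by rw [hFdef]; infer_instance
    have hmemF : ∀ᶠ p : H × H × H in F, p.1 ∈ C ∧ p.2.1 ∈ C ∧ p.2.2 ∈ C :=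
      (eventually_mem_nhdsWithin (α := H)).prod_mk
        ((eventually_mem_nhdsWithin (α := H)).prod_mk
          (eventually_mem_nhdsWithin (α := H)))
    have hrst : r * s⁻¹ * t ∈ closure C :=
      hC.closure.mul_inv_mul_mem_s8 r hr s hs t ht
    -- first limit
    have h₁ : Tendsto (fun p : H × H × H => α (p.1 * p.2.1⁻¹ * p.2.2)) F
        (𝓝 (β (r * s⁻¹ * t))) := by
      have hm : Tendsto (fun p : H × H × H => p.1 * p.2.1⁻¹ * p.2.2) F
          (𝓝[C] (r * s⁻¹ * t)) := by
        rw [tendsto_nhdsWithin_iff]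
        constructor
        · have hle : F ≤ 𝓝 r ×ˢ (𝓝 s ×ˢ 𝓝 t) :=
            prod_mono nhdsWithin_le_nhds (prod_mono nhdsWithin_le_nhds nhdsWithin_le_nhds)
          have hc3 : Tendsto (fun p : H × H × H => p.1 * p.2.1⁻¹ * p.2.2)
              (𝓝 (r, s, t)) (𝓝 (r * s⁻¹ * t)) :=
            ((continuous_fst.mul
              ((continuous_fst.comp continuous_snd).inv)).mul
              (continuous_snd.comp continuous_snd)).tendsto (r, s, t)
          rw [nhds_prod_eq, nhds_prod_eq] at hc3
          exact hc3.comp (le_trans hle le_rfl)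
        · filter_upwards [hmemF] with p hp
          exact hC.mul_inv_mul_mem_s8 p.1 hp.1 p.2.1 hp.2.1 p.2.2 hp.2.2
      exact (hβ _ hrst).comp hm
    -- second limit
    have h₂ : Tendsto (fun p : H × H × H => α p.1 * (α p.2.1)⁻¹ * α p.2.2) F
        (𝓝 (β r * (β s)⁻¹ * β t)) := by
      have t1 : Tendsto (fun p : H × H × H => α p.1) F (𝓝 (β r)) :=
        (hβ r hr).comp tendsto_fst
      have t2 : Tendsto (fun p : H × H × H => α p.2.1) F (𝓝 (β s)) :=
        (hβ s hs).comp (tendsto_fst.comp tendsto_snd)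
      have t3 : Tendsto (fun p : H × H × H => α p.2.2) F (𝓝 (β t)) :=
        (hβ t ht).comp (tendsto_snd.comp tendsto_snd)
      exact (t1.mul t2.inv).mul t3
    -- the two limit functions agree on F
    have heqF : (fun p : H × H × H => α (p.1 * p.2.1⁻¹ * p.2.2)) =ᶠ[F]
        (fun p : H × H × H => α p.1 * (α p.2.1)⁻¹ * α p.2.2) := by
      filter_upwards [hmemF] with p hp
      exact haff p.1 hp.1 p.2.1 hp.2.1 p.2.2 hp.2.2
    exact tendsto_nhds_unique (h₁.congr' heqF) h₂
end

section
/- Let G be a topological group, let 𝓗 be a complex Hilbert space, let π be a unitary representation of G on 𝓗 (that is, a group homomorphism from G into the unitary operators on 𝓗 such that s ↦ π(s)v is continuous for every v ∈ 𝓗), and let ξ, η ∈ 𝓗 with ‖ξ‖ = ‖η‖ = 1. Define u : G → ℂ by u(s) = ⟨π(s)ξ, η⟩. If u(s)² = u(s) for every s ∈ G and u is not identically zero, then the set C = {s ∈ G : u(s) = 1} is an open coset of G, and u is the indicator function of C (so u(s) = 1 if s ∈ C and u(s) = 0 otherwise). -/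
open Pointwise

/-- Auxiliary: the stabilizer of a vector under a unitary representation. -/
def unitaryStabilizer {G : Type*} [Group G]
    {𝓗 : Type*} [NormedAddCommGroup 𝓗] [InnerProductSpace ℂ 𝓗] [CompleteSpace 𝓗]
    (π : G →* unitary (𝓗 →L[ℂ] 𝓗)) (ξ : 𝓗) : Subgroup G where
  carrier := {s : G | (π s : 𝓗 →L[ℂ] 𝓗) ξ = ξ}
  one_mem' := by
    show (π (1 : G) : 𝓗 →L[ℂ] 𝓗) ξ = ξ
    rw [map_one]; rfl
  mul_mem' := by
    intro a b ha hb
    simp only [Set.mem_setOf_eq] at *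
    show (π (a * b) : 𝓗 →L[ℂ] 𝓗) ξ = ξ
    rw [map_mul]
    show (π a : 𝓗 →L[ℂ] 𝓗) ((π b : 𝓗 →L[ℂ] 𝓗) ξ) = ξ
    rw [hb, ha]
  inv_mem' := by
    intro a ha
    simp only [Set.mem_setOf_eq] at *
    show (π a⁻¹ : 𝓗 →L[ℂ] 𝓗) ξ = ξ
    conv_lhs => rw [← ha]
    show ((π a⁻¹ : 𝓗 →L[ℂ] 𝓗) * (π a : 𝓗 →L[ℂ] 𝓗)) ξ = ξ
    rw [← MulMemClass.coe_mul, ← map_mul, inv_mul_cancel, map_one]; rfl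

theorem mem_unitaryStabilizer {G : Type*} [Group G]
    {𝓗 : Type*} [NormedAddCommGroup 𝓗] [InnerProductSpace ℂ 𝓗] [CompleteSpace 𝓗]
    (π : G →* unitary (𝓗 →L[ℂ] 𝓗)) (ξ : 𝓗) (s : G) :
    s ∈ unitaryStabilizer π ξ ↔ (π s : 𝓗 →L[ℂ] 𝓗) ξ = ξ := Iff.rfl

/-- Let `π` be a (continuous) unitary representation of a topological group `G` on a
complex Hilbert space `𝓗`, and `ξ, η` unit vectors.  If the coefficient function
`u s = ⟨π(s)ξ, η⟩` is idempotent (`u s ^ 2 = u s` for all `s`) and not identically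
zero, then `C = {s | u s = 1}` is an open coset of `G` and `u` is the indicator
function of `C`. -/
theorem contractive_idempotent_coefficient {G : Type*}
    [Group G] [TopologicalSpace G] [IsTopologicalGroup G]
    {𝓗 : Type*} [NormedAddCommGroup 𝓗] [InnerProductSpace ℂ 𝓗] [CompleteSpace 𝓗]
    (π : G →* unitary (𝓗 →L[ℂ] 𝓗))
    (hπcont : ∀ v : 𝓗, Continuous fun s : G => (π s : 𝓗 →L[ℂ] 𝓗) v)
    (ξ η : 𝓗) (hξ : ‖ξ‖ = 1) (hη : ‖η‖ = 1)
    (u : G → ℂ) (hu : ∀ s : G, u s = inner ℂ ((π s : 𝓗 →L[ℂ] 𝓗) ξ) η)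
    (hidem : ∀ s : G, u s ^ 2 = u s) (hne : ∃ s : G, u s ≠ 0) :
    IsCoset {s : G | u s = 1} ∧ IsOpen {s : G | u s = 1} ∧
      ∀ s : G, u s = if s ∈ {s : G | u s = 1} then 1 else 0 := by
  have hnorm : ∀ s : G, ‖(π s : 𝓗 →L[ℂ] 𝓗) ξ‖ = 1 := fun s => by
    rw [ContinuousLinearMap.norm_map_of_mem_unitary (π s).property, hξ]
  have h01 : ∀ s : G, u s = 0 ∨ u s = 1 := by
    intro s
    have h : u s * (u s - 1) = 0 := by linear_combination hidem s
    rcases mul_eq_zero.mp h with h | h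
    · exact Or.inl h
    · exact Or.inr (by linear_combination h)
  have hone : ∀ s : G, u s = 1 ↔ (π s : 𝓗 →L[ℂ] 𝓗) ξ = η := by
    intro s
    rw [hu s, inner_eq_one_iff_of_norm_eq_one (hnorm s) hη]
  have hcomp : ∀ a b : G, (π (a * b) : 𝓗 →L[ℂ] 𝓗) ξ
      = (π a : 𝓗 →L[ℂ] 𝓗) ((π b : 𝓗 →L[ℂ] 𝓗) ξ) := fun a b => by
    rw [map_mul]; rfl
  -- the "indicator" part
  have hind : ∀ s : G, u s = if s ∈ {s : G | u s = 1} then 1 else 0 := by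
    intro s
    by_cases h : u s = 1
    · simp [Set.mem_setOf_eq, h]
    · rcases h01 s with h0 | h1
      · simp [Set.mem_setOf_eq, h, h0]
      · exact absurd h1 h
  -- openness
  have hopen : IsOpen {s : G | u s = 1} := by
    have : {s : G | u s = 1} = (fun s : G => (π s : 𝓗 →L[ℂ] 𝓗) ξ) ⁻¹' Metric.ball η 1 := by
      ext s
      simp only [Set.mem_setOf_eq, Set.mem_preimage, Metric.mem_ball, dist_eq_norm]
      constructor
      · intro h; rw [(hone s).mp h]; simpa using zero_lt_one
      · intro h
        rcases h01 s with h0 | h1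
        · exfalso
          have hin : (inner ℂ ((π s : 𝓗 →L[ℂ] 𝓗) ξ) η : ℂ) = 0 := by rw [← hu s]; exact h0
          have hsq : ‖(π s : 𝓗 →L[ℂ] 𝓗) ξ - η‖ ^ 2 = 2 := by
            rw [@norm_sub_sq ℂ, hnorm s, hη, hin]
            norm_num
          nlinarith [norm_nonneg ((π s : 𝓗 →L[ℂ] 𝓗) ξ - η)]
        · exact h1
    rw [this]
    exact (hπcont ξ).isOpen_preimage _ Metric.isOpen_ball
  -- coset
  obtain ⟨s₀, hs₀⟩ := hne
  have hs₀1 : u s₀ = 1 := (h01 s₀).resolve_left hs₀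
  have hs₀η : (π s₀ : 𝓗 →L[ℂ] 𝓗) ξ = η := (hone s₀).mp hs₀1
  refine ⟨⟨unitaryStabilizer π ξ, s₀, ?_⟩, hopen, hind⟩
  ext s
  rw [Set.mem_smul_set_iff_inv_smul_mem]
  simp only [Set.mem_setOf_eq, smul_eq_mul, SetLike.mem_coe, mem_unitaryStabilizer, hone s]
  rw [hcomp s₀⁻¹ s]
  constructor
  · intro h
    rw [h, ← hs₀η, ← hcomp, inv_mul_cancel, map_one]; rfl
  · intro h
    have h2 := congrArg (fun v => (π s₀ : 𝓗 →L[ℂ] 𝓗) v) h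
    simp only [← hcomp] at h2
    rw [mul_inv_cancel_left] at h2
    rw [h2]; exact hs₀η
end

section
/- Let G be a topological group, let 𝓗 be a complex Hilbert space, let π be a unitary representation of G on 𝓗 (that is, a group homomorphism from G into the unitary operators on 𝓗 such that s ↦ π(s)v is continuous for every v ∈ 𝓗), and let ξ ∈ 𝓗 with ‖ξ‖ = 1. Define u : G → ℂ by u(s) = ⟨π(s)ξ, ξ⟩. If u(s)² = u(s) for every s ∈ G, then the set C = {s ∈ G : u(s) = 1} is an open subgroup of G, and u is the indicator function of C. -/
open Pointwise

/-- Let `π` be a (continuous) unitary representation of a topological group `G` on a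
complex Hilbert space `𝓗`, and `ξ` a unit vector.  If the coefficient function
`u s = ⟨π(s)ξ, ξ⟩` is idempotent (`u s ^ 2 = u s` for all `s`), then
`C = {s | u s = 1}` is an open subgroup of `G` and `u` is the indicator function
of `C`. -/
theorem positive_definite_idempotent_coefficient {G : Type*}
    [Group G] [TopologicalSpace G] [IsTopologicalGroup G]
    {𝓗 : Type*} [NormedAddCommGroup 𝓗] [InnerProductSpace ℂ 𝓗] [CompleteSpace 𝓗]
    (π : G →* unitary (𝓗 →L[ℂ] 𝓗))
    (hπcont : ∀ v : 𝓗, Continuous fun s : G => (π s : 𝓗 →L[ℂ] 𝓗) v)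
    (ξ : 𝓗) (hξ : ‖ξ‖ = 1)
    (u : G → ℂ) (hu : ∀ s : G, u s = inner ℂ ((π s : 𝓗 →L[ℂ] 𝓗) ξ) ξ)
    (hidem : ∀ s : G, u s ^ 2 = u s) :
    (∃ N : Subgroup G, (N : Set G) = {s : G | u s = 1}) ∧
      IsOpen {s : G | u s = 1} ∧
      ∀ s : G, u s = if s ∈ {s : G | u s = 1} then 1 else 0 := by
  have hval : ∀ s, u s = 0 ∨ u s = 1 := by
    intro s
    have h : u s * (u s - 1) = 0 := by linear_combination hidem s
    rcases mul_eq_zero.mp h with h0 | h1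
    · exact Or.inl h0
    · exact Or.inr (by linear_combination h1)
  have hnorm : ∀ s, ‖(π s : 𝓗 →L[ℂ] 𝓗) ξ‖ = 1 := fun s => by
    rw [Unitary.norm_map (π s) ξ, hξ]
  have hiff : ∀ s, u s = 1 ↔ (π s : 𝓗 →L[ℂ] 𝓗) ξ = ξ := by
    intro s
    rw [hu s]
    exact inner_eq_one_iff_of_norm_eq_one (hnorm s) hξ
  have h1 : (1 : G) ∈ {s : G | u s = 1} := by
    simp only [Set.mem_setOf_eq, hiff, map_one]
    rfl
  have hmul : ∀ a b : G, a ∈ {s : G | u s = 1} → b ∈ {s : G | u s = 1} →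
      a * b ∈ {s : G | u s = 1} := by
    intro a b ha hb
    simp only [Set.mem_setOf_eq, hiff] at *
    rw [map_mul]
    simp only [MulMemClass.coe_mul, ContinuousLinearMap.mul_apply, hb, ha]
  have hinv : ∀ a : G, a ∈ {s : G | u s = 1} → a⁻¹ ∈ {s : G | u s = 1} := by
    intro a ha
    simp only [Set.mem_setOf_eq, hiff] at *
    conv_lhs => rw [← ha]
    have : (π a⁻¹ : 𝓗 →L[ℂ] 𝓗) ((π a : 𝓗 →L[ℂ] 𝓗) ξ)
        = ((π a⁻¹ * π a : unitary (𝓗 →L[ℂ] 𝓗)) : 𝓗 →L[ℂ] 𝓗) ξ := rfl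
    rw [this, ← map_mul, inv_mul_cancel, map_one]
    rfl
  have hcont : Continuous u := by
    have hu' : u = fun s => (inner ℂ ((π s : 𝓗 →L[ℂ] 𝓗) ξ) ξ : ℂ) := funext hu
    rw [hu']
    exact Continuous.inner (hπcont ξ) continuous_const
  have hset : {s : G | u s = 1} = u ⁻¹' ({0}ᶜ : Set ℂ) := by
    ext s
    simp only [Set.mem_setOf_eq, Set.mem_preimage, Set.mem_compl_iff, Set.mem_singleton_iff]
    constructor
    · intro h; rw [h]; norm_num
    · intro h; rcases hval s with h0 | h1
      · exact absurd h0 h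
      · exact h1
  refine ⟨⟨⟨⟨⟨{s : G | u s = 1}, hmul _ _⟩, h1⟩, hinv _⟩, rfl⟩, ?_, ?_⟩
  · rw [hset]
    exact (isOpen_compl_singleton).preimage hcont
  · intro s
    by_cases h : u s = 1
    · simp [h]
    · rcases hval s with h0 | h1
      · simp [h, h0]
      · exact absurd h1 h
end
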